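/- arXiv:1906.08077 — 4 statements merged into one kernel-verified Lean document; each statement's English description precedes it below -/
import Mathlib

section
/- Let (y, z, θ) solve the translator system with μ ≠ 0 and f(θ₀) ≠ 0, where f(θ) = μ·cos θ − (θ − θ₀ + λ)·sin θ. Then the set { s ∈ ℝ : sin θ(s) = 0 } contains at most one element (so z has at most one critical point), and the set { s ∈ ℝ : cos θ(s) = 0 } contains at most two elements (so y has at most two critical points). -/
open Real

/-!
Along a solution, `W = e^z θ'` solves a linear first-order ODE, so it keeps the sign of
`W(0) = f(θ₀) ≠ 0`; in particular `θ` is injective. Where `sin θ = 0` one has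
`W = μ e^z cos θ`, so `cos θ` takes the same sign at all zeros of `sin θ`. Two such zeros would
make the continuous, injective `θ` pass through a value half a turn further, a zero of `sin θ`
with the opposite sign of `cos θ`. Between two zeros of `cos θ` the function `θ` crosses a
multiple of `π`, i.e. a zero of `sin θ`; since there is at most one, `cos θ` has at most two
zeros.
-/

theorem eq_mul_exp_integral_of_hasDerivAt {a W : ℝ → ℝ} (ha : Continuous a)
    (hW : ∀ s, HasDerivAt W (a s * W s) s) (t₀ s : ℝ) :
    W s = W t₀ * exp (∫ t in t₀..s, a t) := by
  set A : ℝ → ℝ := fun u => ∫ t in t₀..u, a t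
  have hA : ∀ u, HasDerivAt A (a u) u := fun u => (ha.integral_hasStrictDerivAt t₀ u).hasDerivAt
  have hF : ∀ u, HasDerivAt (fun u => W u * exp (-A u)) 0 u := fun u => by
    refine ((hW u).mul (hA u).neg.exp).congr_deriv ?_
    ring
  have hconst := is_const_of_deriv_eq_zero (fun u => (hF u).differentiableAt)
    (fun u => (hF u).deriv) s t₀
  simp only [A, intervalIntegral.integral_same, neg_zero, exp_zero, mul_one] at hconst
  rw [← hconst, mul_assoc, ← exp_add, neg_add_cancel, exp_zero, mul_one]

theorem injective_of_hasDerivAt_ne_zero {f f' : ℝ → ℝ} (hf : ∀ x, HasDerivAt f (f' x) x)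
    (hf' : ∀ x, f' x ≠ 0) : Function.Injective f := by
  intro a b hab
  by_contra hne
  wlog hlt : a < b generalizing a b
  · exact this hab.symm (Ne.symm hne) (lt_of_le_of_ne (not_lt.1 hlt) (Ne.symm hne))
  obtain ⟨c, -, hc⟩ := exists_hasDerivAt_eq_zero hlt
    (HasDerivAt.continuousOn fun x _ => hf x) hab fun x _ => hf x
  exact hf' c hc

theorem add_pi_le_of_sin_eq_zero {x y : ℝ} (hx : sin x = 0) (hy : sin y = 0) (hxy : x < y) :
    x + π ≤ y := by
  obtain ⟨m, rfl⟩ := sin_eq_zero_iff.1 hx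
  obtain ⟨n, rfl⟩ := sin_eq_zero_iff.1 hy
  have hmn : m < n := by exact_mod_cast lt_of_mul_lt_mul_right hxy pi_pos.le
  have : (m : ℝ) + 1 ≤ n := by exact_mod_cast hmn
  nlinarith [pi_pos]

theorem add_pi_le_of_cos_eq_zero {x y : ℝ} (hx : cos x = 0) (hy : cos y = 0) (hxy : x < y) :
    x + π ≤ y := by
  have := add_pi_le_of_sin_eq_zero (x := x + π / 2) (y := y + π / 2)
    (by rwa [sin_add_pi_div_two]) (by rwa [sin_add_pi_div_two]) (by linarith)
  linarith

theorem subsingleton_setOf_sin_eq_zero {θ : ℝ → ℝ} {κ : ℝ} (hcont : Continuous θ)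
    (hinj : Function.Injective θ) (hsign : ∀ s, sin (θ s) = 0 → 0 < κ * cos (θ s)) :
    {s | sin (θ s) = 0}.Subsingleton := by
  intro s hs t ht
  by_contra hst
  wlog hlt : θ s < θ t generalizing s t
  · exact this ht hs (Ne.symm hst) (lt_of_le_of_ne (not_lt.1 hlt) (hinj.ne (Ne.symm hst)))
  have hpi := add_pi_le_of_sin_eq_zero hs ht hlt
  obtain ⟨r, hr⟩ := intermediate_value_univ s t hcont ⟨by linarith [pi_pos], hpi⟩
  have hr_sin : sin (θ r) = 0 := by rw [hr, sin_add_pi, hs, neg_zero]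
  have := hsign r hr_sin
  rw [hr, cos_add_pi] at this
  linarith [hsign s hs]

theorem exists_sin_eq_zero_of_cos_eq_zero {θ : ℝ → ℝ} {s t : ℝ} (hcont : Continuous θ)
    (hst : s < t) (hne : θ s ≠ θ t) (hs : cos (θ s) = 0) (ht : cos (θ t) = 0) :
    ∃ r ∈ Set.Ioo s t, sin (θ r) = 0 := by
  rcases hne.lt_or_gt with hlt | hlt
  · obtain ⟨r, hr, hθr⟩ := intermediate_value_Ioo hst.le hcont.continuousOn
      (show θ s + π / 2 ∈ Set.Ioo (θ s) (θ t) by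
        constructor <;> linarith [pi_pos, add_pi_le_of_cos_eq_zero hs ht hlt])
    exact ⟨r, hr, by rw [hθr, sin_add_pi_div_two, hs]⟩
  · obtain ⟨r, hr, hθr⟩ := intermediate_value_Ioo' hst.le hcont.continuousOn
      (show θ t + π / 2 ∈ Set.Ioo (θ t) (θ s) by
        constructor <;> linarith [pi_pos, add_pi_le_of_cos_eq_zero ht hs hlt])
    exact ⟨r, hr, by rw [hθr, sin_add_pi_div_two, ht]⟩

theorem encard_le_two_of_forall_exists_mem_between {α : Type*} [LinearOrder α] {S T : Set α}
    (hT : T.Subsingleton) (hS : ∀ a ∈ S, ∀ b ∈ S, a < b → ∃ w ∈ T, a < w ∧ w < b) :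
    S.encard ≤ 2 := by
  rcases S.eq_empty_or_nonempty with rfl | ⟨a, -⟩
  · simp
  obtain ⟨w, hTw⟩ : ∃ w, T ⊆ {w} := by
    rcases hT.eq_empty_or_singleton with rfl | ⟨w, rfl⟩
    exacts [⟨a, Set.empty_subset _⟩, ⟨w, subset_rfl⟩]
  have hsep : ∀ a ∈ S, ∀ b ∈ S, a < b → a < w ∧ w < b := fun a ha b hb hab => by
    obtain ⟨v, hv, hav, hvb⟩ := hS a ha b hb hab
    rw [Set.eq_of_mem_singleton (hTw hv)] at hav hvb
    exact ⟨hav, hvb⟩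
  have hlow : (S ∩ Set.Iio w).encard ≤ 1 := by
    refine Set.encard_le_one_iff.2 fun a b ha hb => le_antisymm ?_ ?_ <;>
      refine not_lt.1 fun h => ?_
    · exact (hsep b hb.1 a ha.1 h).2.not_gt ha.2
    · exact (hsep a ha.1 b hb.1 h).2.not_gt hb.2
  have hhigh : (S ∩ Set.Ici w).encard ≤ 1 := by
    refine Set.encard_le_one_iff.2 fun a b ha hb => le_antisymm ?_ ?_ <;>
      refine not_lt.1 fun h => ?_
    · exact (hsep b hb.1 a ha.1 h).1.not_ge hb.2
    · exact (hsep a ha.1 b hb.1 h).1.not_ge ha.2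
  calc S.encard ≤ (S ∩ Set.Iio w ∪ S ∩ Set.Ici w).encard := by
        rw [← Set.inter_union_distrib_left, Set.Iio_union_Ici, Set.inter_univ]
    _ ≤ (S ∩ Set.Iio w).encard + (S ∩ Set.Ici w).encard := Set.encard_union_le _ _
    _ ≤ 1 + 1 := add_le_add hlow hhigh
    _ = 2 := one_add_one_eq_two

noncomputable def translatorW (lam μ : ℝ) (y z θ : ℝ → ℝ) (s : ℝ) : ℝ :=
  μ * exp (z s) * cos (θ s) - (lam + μ * y s) * sin (θ s)

theorem translator_rhs_eq_exp_mul_translatorW (lam μ : ℝ) (y z θ : ℝ → ℝ) (s : ℝ) :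
    -lam * exp (-z s) * sin (θ s) + μ * (cos (θ s) - y s * exp (-z s) * sin (θ s)) =
      exp (-z s) * translatorW lam μ y z θ s := by
  have hez : exp (-z s) * exp (z s) = 1 := by rw [← exp_add, neg_add_cancel, exp_zero]
  unfold translatorW
  linear_combination (-(μ * cos (θ s))) * hez

theorem hasDerivAt_translatorW {lam μ : ℝ} {y z θ : ℝ → ℝ}
    (hy : ∀ s, HasDerivAt y (exp (z s) * cos (θ s)) s)
    (hz : ∀ s, HasDerivAt z (sin (θ s)) s)
    (hθ : ∀ s, HasDerivAt θ
      (-lam * exp (-z s) * sin (θ s) + μ * (cos (θ s) - y s * exp (-z s) * sin (θ s))) s)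
    (s : ℝ) :
    HasDerivAt (translatorW lam μ y z θ)
      (-(exp (-z s) * (μ * exp (z s) * sin (θ s) + (lam + μ * y s) * cos (θ s))) *
        translatorW lam μ y z θ s) s := by
  have h := ((((hz s).exp.const_mul μ).mul (hθ s).cos).sub
    ((((hy s).const_mul μ).const_add lam).mul (hθ s).sin))
  rw [translator_rhs_eq_exp_mul_translatorW] at h
  refine h.congr_deriv ?_
  ring

theorem translatorW_mul_translatorW_zero_pos {lam μ : ℝ} {y z θ : ℝ → ℝ}
    (hy : ∀ s, HasDerivAt y (exp (z s) * cos (θ s)) s)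
    (hz : ∀ s, HasDerivAt z (sin (θ s)) s)
    (hθ : ∀ s, HasDerivAt θ
      (-lam * exp (-z s) * sin (θ s) + μ * (cos (θ s) - y s * exp (-z s) * sin (θ s))) s)
    (h0 : translatorW lam μ y z θ 0 ≠ 0) (s : ℝ) :
    0 < translatorW lam μ y z θ s * translatorW lam μ y z θ 0 := by
  have hcont : Continuous fun s =>
      -(exp (-z s) * (μ * exp (z s) * sin (θ s) + (lam + μ * y s) * cos (θ s))) := by
    have := continuous_iff_continuousAt.2 fun s => (hy s).continuousAt
    have := continuous_iff_continuousAt.2 fun s => (hz s).continuousAt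
    have := continuous_iff_continuousAt.2 fun s => (hθ s).continuousAt
    fun_prop
  rw [eq_mul_exp_integral_of_hasDerivAt hcont (hasDerivAt_translatorW hy hz hθ) 0 s,
    mul_right_comm]
  exact mul_pos (mul_self_pos.2 h0) (exp_pos _)

theorem stmt9_general
    (lam μ θ₀ : ℝ) (y z θ : ℝ → ℝ)
    (hy0 : y 0 = 0) (hz0 : z 0 = 0) (hθ0 : θ 0 = θ₀)
    (hy : ∀ s : ℝ, HasDerivAt y (Real.exp (z s) * Real.cos (θ s)) s)
    (hz : ∀ s : ℝ, HasDerivAt z (Real.sin (θ s)) s)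
    (hθ : ∀ s : ℝ, HasDerivAt θ
      (-lam * Real.exp (-z s) * Real.sin (θ s) +
        μ * (Real.cos (θ s) - y s * Real.exp (-z s) * Real.sin (θ s))) s)
    (hne : μ * Real.cos θ₀ - (θ₀ - θ₀ + lam) * Real.sin θ₀ ≠ 0) :
    {s : ℝ | Real.sin (θ s) = 0}.Subsingleton ∧
    {s : ℝ | Real.cos (θ s) = 0}.encard ≤ 2 := by
  set W := translatorW lam μ y z θ
  have hW0 : W 0 ≠ 0 := by simpa [W, translatorW, hy0, hz0, hθ0] using hne
  have hWpos : ∀ s, 0 < W s * W 0 := translatorW_mul_translatorW_zero_pos hy hz hθ hW0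
  have hcont : Continuous θ := continuous_iff_continuousAt.2 fun s => (hθ s).continuousAt
  have hinj : Function.Injective θ := by
    refine injective_of_hasDerivAt_ne_zero hθ fun s => ?_
    rw [translator_rhs_eq_exp_mul_translatorW]
    exact mul_ne_zero (exp_ne_zero _) fun h => (hWpos s).ne' (by rw [show W s = 0 from h, zero_mul])
  have hsign : ∀ s, sin (θ s) = 0 → 0 < μ * W 0 * cos (θ s) := fun s hs => by
    have hWs : W s = exp (z s) * (μ * cos (θ s)) := by
      simp only [W, translatorW, hs, mul_zero, sub_zero]
      ring
    have h := hWpos s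
    rw [hWs, mul_assoc] at h
    linarith [pos_of_mul_pos_right h (exp_pos _).le]
  have hsin := subsingleton_setOf_sin_eq_zero hcont hinj hsign
  refine ⟨hsin, encard_le_two_of_forall_exists_mem_between hsin fun a ha b hb hab => ?_⟩
  obtain ⟨r, ⟨har, hrb⟩, hr⟩ :=
    exists_sin_eq_zero_of_cos_eq_zero hcont hab (hinj.ne hab.ne) ha hb
  exact ⟨r, hr, har, hrb⟩

theorem stmt9
    (lam μ θ₀ : ℝ) (y z θ : ℝ → ℝ)
    (hy0 : y 0 = 0) (hz0 : z 0 = 0) (hθ0 : θ 0 = θ₀)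
    (hy : ∀ s : ℝ, HasDerivAt y (Real.exp (z s) * Real.cos (θ s)) s)
    (hz : ∀ s : ℝ, HasDerivAt z (Real.sin (θ s)) s)
    (hθ : ∀ s : ℝ, HasDerivAt θ
      (-lam * Real.exp (-z s) * Real.sin (θ s) +
        μ * (Real.cos (θ s) - y s * Real.exp (-z s) * Real.sin (θ s))) s)
    (hμ : μ ≠ 0)
    (hne : μ * Real.cos θ₀ - (θ₀ - θ₀ + lam) * Real.sin θ₀ ≠ 0) :
    {s : ℝ | Real.sin (θ s) = 0}.Subsingleton ∧
    {s : ℝ | Real.cos (θ s) = 0}.encard ≤ 2 :=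
  stmt9_general lam μ θ₀ y z θ hy0 hz0 hθ0 hy hz hθ hne
end

section
/- Let θ : ℝ → ℝ satisfy θ'(s) = (π/2 − θ(s))·sin θ(s) for all s, with θ(0) = θ₀ ∈ (0, π) and θ₀ ≠ π/2, and let y, z : ℝ → ℝ satisfy y(0) = z(0) = 0, z'(s) = sin θ(s), y'(s) = e^{z(s)}·cos θ(s). Then as s → +∞: θ(s) → π/2; there exists a nonzero real constant C with e^{s}·(π/2 − θ(s)) → C; z(s) − s converges to a finite limit; and y(s)/s converges to a finite nonzero limit (so the profile curve is asymptotic to a straight line y = C₁ z + C₀ with C₁ ≠ 0). -/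
open Real Filter Topology

/-!
Put `u = σ (π/2 - θ)` with the sign `σ = ±1` chosen so that `u 0 ∈ (0, π/2)`; then
`u' = -u cos u`, `z' = cos u` and `(σ y)' = e^z sin u`. Barrier arguments give
`u 0 e^{-s} ≤ u s ≤ u 0` for `s ≥ 0`, so `cos u ≥ c := cos (u 0) > 0` and
`u s ≤ u 0 e^{-cs}`. Hence `1 - cos u ≤ u²/2` is integrable on `(0, ∞)`; it is the
derivative of `log u + s` and of `s - z`, so `e^s u` tends to a positive limit and `z - s`
converges. Finally `(σ y)' = e^{z - s} · e^s u · sinc u` has a positive limit, which is then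
also the limit of `σ y s / s`.
-/

open Set MeasureTheory Asymptotics

theorem isLittleO_id_of_hasDerivAt_of_tendsto_zero {g g' : ℝ → ℝ}
    (hg : ∀ s, HasDerivAt g (g' s) s) (h : Tendsto g' atTop (𝓝 0)) : g =o[atTop] id := by
  refine isLittleO_iff.2 fun ε hε => ?_
  obtain ⟨N, hN⟩ := eventually_atTop.1
    (h.eventually (Metric.closedBall_mem_nhds 0 (half_pos hε)))
  have hlip : ∀ s ≥ N, ‖g s - g N‖ ≤ ε / 2 * ‖s - N‖ := fun s hs =>
    (convex_Ici N).norm_image_sub_le_of_norm_hasDerivWithin_le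
      (fun x _ => (hg x).hasDerivWithinAt) (fun x hx => by simpa using hN x hx) self_mem_Ici hs
  filter_upwards [eventually_ge_atTop N,
    (tendsto_id.const_mul_atTop hε).eventually_ge_atTop (2 * ‖g N‖ + ε * |N|)] with s hsN hs
  have hdiff : ‖g s - g N‖ ≤ ε / 2 * (s - N) := by
    simpa [abs_of_nonneg (sub_nonneg.2 hsN)] using hlip s hsN
  calc ‖g s‖ ≤ ‖g N‖ + ‖g s - g N‖ := norm_le_norm_add_norm_sub' _ _
    _ ≤ ε * s := by nlinarith [mul_le_mul_of_nonneg_left (neg_le_abs N) hε.le, id_eq s]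
    _ ≤ ε * ‖id s‖ := by gcongr; exact le_abs_self s

theorem tendsto_div_self_of_hasDerivAt {f f' : ℝ → ℝ} {M : ℝ}
    (hf : ∀ s, HasDerivAt f (f' s) s) (h : Tendsto f' atTop (𝓝 M)) :
    Tendsto (fun s => f s / s) atTop (𝓝 M) := by
  have hlin : (fun s => f s - M * s) =o[atTop] id :=
    isLittleO_id_of_hasDerivAt_of_tendsto_zero (g' := fun s => f' s - M)
      (fun s => ((hf s).sub ((hasDerivAt_id s).const_mul M)).congr_deriv (by ring))
      (by simpa using h.sub_const M)
  have := hlin.tendsto_div_nhds_zero.add_const M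
  rw [zero_add] at this
  refine this.congr' ?_
  filter_upwards [eventually_ne_atTop 0] with s hs
  simp only [id]
  field_simp
  ring

theorem Real.mul_sinc (x : ℝ) : x * sinc x = sin x := by
  by_cases hx : x = 0
  · simp [hx]
  · rw [sinc_of_ne_zero hx, mul_div_cancel₀ _ hx]

def SolvesNegMulCos (u : ℝ → ℝ) : Prop :=
  ∀ s, HasDerivAt u (-(u s * cos (u s))) s

namespace SolvesNegMulCos

variable {u : ℝ → ℝ}

theorem continuous (hu : SolvesNegMulCos u) : Continuous u :=
  continuous_iff_continuousAt.2 fun s => (hu s).continuousAt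

theorem le_apply_zero (hu : SolvesNegMulCos u) (hu0 : u 0 ∈ Ioo 0 (π / 2)) {s : ℝ}
    (hs : 0 ≤ s) : u s ≤ u 0 := by
  refine image_le_of_deriv_right_lt_deriv_boundary hu.continuous.continuousOn
    (fun x _ => (hu x).hasDerivWithinAt) (B := fun _ => u 0) le_rfl (fun _ => hasDerivAt_const _ _)
    (fun x _ hx => ?_) ⟨hs, le_rfl⟩
  have := cos_pos_of_mem_Ioo ⟨by linarith [hu0.1, pi_pos], hu0.2⟩
  rw [hx]
  nlinarith [hu0.1]

theorem apply_zero_mul_exp_neg_le (hu : SolvesNegMulCos u) (hu0 : u 0 ∈ Ioo 0 (π / 2))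
    {s : ℝ} (hs : 0 ≤ s) : u 0 * exp (-s) ≤ u s := by
  refine image_le_of_deriv_right_lt_deriv_boundary (by fun_prop)
    (fun x _ => ((hasDerivAt_neg x).exp.const_mul (u 0)).hasDerivWithinAt) (by simp) hu
    (fun x hx hux => ?_) ⟨hs, le_rfl⟩
  rw [← hux]
  have hv : 0 < u 0 * exp (-x) := mul_pos hu0.1 (exp_pos _)
  have hv' : u 0 * exp (-x) ≤ π / 2 := by
    have : exp (-x) ≤ 1 := exp_le_one_iff.2 (by linarith [hx.1])
    nlinarith [hu0.1, hu0.2]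
  have := cos_lt_cos_of_nonneg_of_le_pi_div_two le_rfl hv' hv
  rw [cos_zero] at this
  nlinarith

theorem pos (hu : SolvesNegMulCos u) (hu0 : u 0 ∈ Ioo 0 (π / 2)) {s : ℝ} (hs : 0 ≤ s) :
    0 < u s :=
  (mul_pos hu0.1 (exp_pos _)).trans_le (hu.apply_zero_mul_exp_neg_le hu0 hs)

theorem le_apply_zero_mul_exp (hu : SolvesNegMulCos u) (hu0 : u 0 ∈ Ioo 0 (π / 2)) {s : ℝ}
    (hs : 0 ≤ s) : u s ≤ u 0 * exp (-(cos (u 0) * s)) := by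
  set c := cos (u 0)
  have hexp (x : ℝ) : HasDerivAt (fun x => exp (c * x)) (exp (c * x) * c) x := by
    simpa using ((hasDerivAt_id x).const_mul c).exp
  have key : u s * exp (c * s) ≤ u 0 := by
    refine image_le_of_deriv_right_le_deriv_boundary (f := fun x => u x * exp (c * x))
      (f' := fun x => exp (c * x) * (u x * (c - cos (u x))))
      (hu.continuous.mul (by fun_prop)).continuousOn
      (fun x _ => (((hu x).mul (hexp x)).congr_deriv (by ring)).hasDerivWithinAt)
      (by simp) continuousOn_const (fun _ _ => hasDerivWithinAt_const _ _ (u 0))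
      (fun x hx => ?_) ⟨hs, le_rfl⟩
    have hc : c ≤ cos (u x) := cos_le_cos_of_nonneg_of_le_pi (hu.pos hu0 hx.1).le
      (by linarith [hu0.2, pi_pos]) (hu.le_apply_zero hu0 hx.1)
    have := mul_nonneg (exp_pos (c * x)).le (mul_nonneg (hu.pos hu0 hx.1).le (sub_nonneg.2 hc))
    nlinarith
  calc u s = u s * exp (c * s) * exp (-(c * s)) := by
        rw [mul_assoc, ← exp_add, add_neg_cancel, exp_zero, mul_one]
    _ ≤ u 0 * exp (-(c * s)) := by gcongr

theorem integrableOn_one_sub_cos (hu : SolvesNegMulCos u) (hu0 : u 0 ∈ Ioo 0 (π / 2)) :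
    IntegrableOn (fun s => 1 - cos (u s)) (Ioi 0) := by
  set c := cos (u 0)
  have hc : 0 < c := cos_pos_of_mem_Ioo ⟨by linarith [hu0.1, pi_pos], hu0.2⟩
  refine Integrable.mono' ((exp_neg_integrableOn_Ioi 0 (by positivity : 0 < 2 * c)).const_mul
    (u 0 ^ 2 / 2)) (continuous_const.sub (continuous_cos.comp hu.continuous)).aestronglyMeasurable
    ((ae_restrict_mem measurableSet_Ioi).mono fun s hs => ?_)
  have hus := hu.pos hu0 (le_of_lt hs)
  rw [Real.norm_of_nonneg (sub_nonneg.2 (cos_le_one _))]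
  calc 1 - cos (u s) ≤ u s ^ 2 / 2 := by linarith [one_sub_sq_div_two_le_cos (x := u s)]
    _ ≤ (u 0 * exp (-(c * s))) ^ 2 / 2 := by gcongr; exact hu.le_apply_zero_mul_exp hu0 hs.le
    _ = u 0 ^ 2 / 2 * exp (-(2 * c) * s) := by rw [mul_pow, ← exp_nat_mul]; ring_nf

theorem tendsto_exp_mul (hu : SolvesNegMulCos u) (hu0 : u 0 ∈ Ioo 0 (π / 2)) :
    ∃ C, 0 < C ∧ Tendsto (fun s => exp s * u s) atTop (𝓝 C) := by
  have hlog : ∀ s ∈ Ioi (0 : ℝ), HasDerivAt (fun s => log (u s) + s) (1 - cos (u s)) s :=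
    fun s hs => (((hu s).log (hu.pos hu0 (le_of_lt hs)).ne').add (hasDerivAt_id s)).congr_deriv
      (by field_simp [(hu.pos hu0 (le_of_lt hs)).ne']; ring)
  refine ⟨_, exp_pos _, ((continuous_exp.tendsto _).comp
    (tendsto_limUnder_of_hasDerivAt_of_integrableOn_Ioi hlog
      (hu.integrableOn_one_sub_cos hu0))).congr' ?_⟩
  filter_upwards [eventually_ge_atTop 0] with s hs
  simp [exp_add, exp_log (hu.pos hu0 hs), mul_comm]

theorem tendsto_sub_id {z : ℝ → ℝ} (hu : SolvesNegMulCos u) (hu0 : u 0 ∈ Ioo 0 (π / 2))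
    (hz : ∀ s, HasDerivAt z (cos (u s)) s) : ∃ L, Tendsto (fun s => z s - s) atTop (𝓝 L) :=
  ⟨_, tendsto_limUnder_of_hasDerivAt_of_integrableOn_Ioi (a := 0)
    (fun s _ => (hz s).sub (hasDerivAt_id s))
    ((hu.integrableOn_one_sub_cos hu0).neg.congr_fun (fun _ _ => neg_sub _ _)
      measurableSet_Ioi)⟩

theorem profile_asymptotics (hu : SolvesNegMulCos u) (hu0 : u 0 ∈ Ioo 0 (π / 2))
    {y z : ℝ → ℝ} (hz : ∀ s, HasDerivAt z (cos (u s)) s)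
    (hy : ∀ s, HasDerivAt y (exp (z s) * sin (u s)) s) :
    Tendsto u atTop (𝓝 0) ∧
    (∃ C, 0 < C ∧ Tendsto (fun s => exp s * u s) atTop (𝓝 C)) ∧
    (∃ L, Tendsto (fun s => z s - s) atTop (𝓝 L)) ∧
    ∃ M, 0 < M ∧ Tendsto (fun s => y s / s) atTop (𝓝 M) := by
  obtain ⟨C, hC, hCu⟩ := hu.tendsto_exp_mul hu0
  obtain ⟨L, hL⟩ := hu.tendsto_sub_id hu0 hz
  have hu_lim : Tendsto u atTop (𝓝 0) := by
    have := hCu.mul tendsto_exp_neg_atTop_nhds_zero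
    rw [mul_zero] at this
    refine this.congr fun s => ?_
    rw [mul_right_comm, ← exp_add, add_neg_cancel, exp_zero, one_mul]
  have hy' : Tendsto (fun s => exp (z s) * sin (u s)) atTop (𝓝 (exp L * C)) := by
    have := ((continuous_exp.tendsto L).comp hL).mul
      (hCu.mul ((continuous_sinc.tendsto 0).comp hu_lim))
    rw [sinc_zero, mul_one] at this
    refine this.congr fun s => ?_
    simp only [Function.comp_apply, ← mul_sinc (u s), exp_sub]
    field_simp
  exact ⟨hu_lim, ⟨C, hC, hCu⟩, ⟨L, hL⟩, _, by positivity, tendsto_div_self_of_hasDerivAt hy hy'⟩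

end SolvesNegMulCos

theorem stmt15_general (θ₀ : ℝ) (hθ₀ : θ₀ ∈ Set.Ioo 0 π) (hθ₀' : θ₀ ≠ π / 2)
    (θ y z : ℝ → ℝ) (hθ0 : θ 0 = θ₀)
    (hθ : ∀ s : ℝ, HasDerivAt θ ((π / 2 - θ s) * Real.sin (θ s)) s)
    (hz : ∀ s : ℝ, HasDerivAt z (Real.sin (θ s)) s)
    (hy : ∀ s : ℝ, HasDerivAt y (Real.exp (z s) * Real.cos (θ s)) s) :
    Tendsto θ atTop (𝓝 (π / 2)) ∧
    (∃ C : ℝ, C ≠ 0 ∧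
      Tendsto (fun s => Real.exp s * (π / 2 - θ s)) atTop (𝓝 C)) ∧
    (∃ L : ℝ, Tendsto (fun s => z s - s) atTop (𝓝 L)) ∧
    (∃ M : ℝ, M ≠ 0 ∧ Tendsto (fun s => y s / s) atTop (𝓝 M)) := by
  obtain ⟨σ, hσ, hu0⟩ : ∃ σ : ℝ, (σ = 1 ∨ σ = -1) ∧ σ * (π / 2 - θ₀) ∈ Ioo 0 (π / 2) := by
    rcases hθ₀'.lt_or_gt with h | h
    · exact ⟨1, .inl rfl, by constructor <;> linarith [hθ₀.1]⟩
    · exact ⟨-1, .inr rfl, by constructor <;> linarith [hθ₀.2]⟩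
  have hσσ : σ * σ = 1 := by rcases hσ with rfl | rfl <;> norm_num
  have hcos (x : ℝ) : cos (σ * x) = cos x := by rcases hσ with rfl | rfl <;> simp
  have hsin (x : ℝ) : sin (σ * x) = σ * sin x := by rcases hσ with rfl | rfl <;> simp
  have hσ₀ : σ ≠ 0 := left_ne_zero_of_mul_eq_one hσσ
  have hu : SolvesNegMulCos fun s => σ * (π / 2 - θ s) := fun s =>
    ((hθ s).const_sub _).const_mul σ |>.congr_deriv (by rw [hcos, cos_pi_div_two_sub]; ring)
  obtain ⟨hθ_lim, ⟨C, hC, hCu⟩, hL, ⟨M, hM, hMy⟩⟩ :=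
    hu.profile_asymptotics (hθ0 ▸ hu0) (y := fun s => σ * y s)
      (fun s => by simpa [hcos, cos_pi_div_two_sub] using hz s)
      (fun s => by simpa [hsin, sin_pi_div_two_sub, mul_left_comm] using (hy s).const_mul σ)
  refine ⟨?_, ⟨σ * C, mul_ne_zero hσ₀ hC.ne', ?_⟩, hL, σ * M, mul_ne_zero hσ₀ hM.ne', ?_⟩
  · simpa [← mul_assoc, hσσ] using (hθ_lim.const_mul σ).const_sub (π / 2)
  · exact (hCu.const_mul σ).congr fun s => by linear_combination exp s * (π / 2 - θ s) * hσσ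
  · simpa [mul_div_assoc, ← mul_assoc, hσσ] using hMy.const_mul σ

theorem stmt15 (θ₀ : ℝ) (hθ₀ : θ₀ ∈ Set.Ioo 0 π) (hθ₀' : θ₀ ≠ π / 2)
    (θ y z : ℝ → ℝ) (hθ0 : θ 0 = θ₀)
    (hθ : ∀ s : ℝ, HasDerivAt θ ((π / 2 - θ s) * Real.sin (θ s)) s)
    (hy0 : y 0 = 0) (hz0 : z 0 = 0)
    (hz : ∀ s : ℝ, HasDerivAt z (Real.sin (θ s)) s)
    (hy : ∀ s : ℝ, HasDerivAt y (Real.exp (z s) * Real.cos (θ s)) s) :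
    Tendsto θ atTop (𝓝 (π / 2)) ∧
    (∃ C : ℝ, C ≠ 0 ∧
      Tendsto (fun s => Real.exp s * (π / 2 - θ s)) atTop (𝓝 C)) ∧
    (∃ L : ℝ, Tendsto (fun s => z s - s) atTop (𝓝 L)) ∧
    (∃ M : ℝ, M ≠ 0 ∧ Tendsto (fun s => y s / s) atTop (𝓝 M)) :=
  stmt15_general θ₀ hθ₀ hθ₀' θ y z hθ0 hθ hz hy
end

section
/- Let (y, z, θ) solve the translator system with μ ≠ 0 and f(θ₀) ≠ 0, where f(θ) = μ·cos θ − (θ − θ₀ + λ)·sin θ. Then the limit θ⁺ = lim_{s→+∞} θ(s) exists and satisfies sin θ⁺ ≠ 0; consequently z(s)/s → sin θ⁺ as s → +∞, so z diverges linearly to +∞ or −∞. Moreover, if sin θ⁺ < 0 (i.e., z(s) → −∞), then y(s) → −λ/μ as s → +∞. The analogous statements hold as s → −∞. -/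
/-!
Along a solution `(λ + μ y) e^{-z} - θ` is constant, so `θ` solves the autonomous scalar equation
`θ' = f(θ)`. The zeros of `f` are unbounded in both directions, and by uniqueness of solutions
`θ` never reaches one, since it does not start at one. Hence `θ' = f(θ)` never vanishes: `θ` is
strictly monotone and trapped between two zeros of `f`, so it converges at `±∞`, necessarily to
zeros of `f`, where `sin ≠ 0` because `μ ≠ 0`. Then `z' = sin θ → sin θ^±` gives
`z(s)/s → sin θ^±`, and when `z → -∞` the first integral, solved as
`y = ((θ - θ₀ + λ) e^z - λ) / μ`, gives `y → -λ/μ`.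
-/

open Real Filter Topology Set Asymptotics

section SlopeAtInfinity

theorem isLittleO_id_atTop_of_hasDerivAt_tendsto_zero {E : Type*} [NormedAddCommGroup E]
    [NormedSpace ℝ E] {g g' : ℝ → E} (hg : ∀ s, HasDerivAt g (g' s) s)
    (h : Tendsto g' atTop (𝓝 0)) : g =o[atTop] id := by
  refine isLittleO_iff.2 fun c hc => ?_
  have h' : Tendsto (fun s => ‖g' s‖) atTop (𝓝 0) := by simpa using h.norm
  obtain ⟨S, hS⟩ := eventually_atTop.1
    ((h'.eventually (gt_mem_nhds (half_pos hc))).and (eventually_ge_atTop 0))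
  have hS0 : 0 ≤ S := (hS S le_rfl).2
  filter_upwards [eventually_ge_atTop S, eventually_ge_atTop (2 * ‖g S‖ / c)] with s hSs hs
  have hincr : ‖g s - g S‖ ≤ c / 2 * (s - S) :=
    norm_image_sub_le_of_norm_deriv_le_segment' (fun x _ => (hg x).hasDerivWithinAt)
      (fun x hx => (hS x hx.1).1.le) s ⟨hSs, le_rfl⟩
  have hgS : ‖g S‖ ≤ c / 2 * s := by
    rw [div_le_iff₀ hc] at hs; linarith
  calc ‖g s‖ ≤ ‖g S‖ + ‖g s - g S‖ := norm_le_insert' _ _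
    _ ≤ c * ‖id s‖ := by
      rw [id, Real.norm_of_nonneg (hS0.trans hSs)]
      linarith [mul_nonneg hc.le hS0]

theorem tendsto_div_atTop_of_hasDerivAt_tendsto {g g' : ℝ → ℝ} {L : ℝ}
    (hg : ∀ s, HasDerivAt g (g' s) s) (h : Tendsto g' atTop (𝓝 L)) :
    Tendsto (fun s => g s / s) atTop (𝓝 L) := by
  have ho : (fun s => g s - L * s) =o[atTop] id :=
    isLittleO_id_atTop_of_hasDerivAt_tendsto_zero (g' := fun s => g' s - L)
      (fun s => by simpa using (hg s).fun_sub ((hasDerivAt_id' s).const_mul L))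
      (by simpa using h.sub_const L)
  have hL := ho.tendsto_div_nhds_zero.add_const L
  rw [zero_add] at hL
  refine hL.congr' ?_
  filter_upwards [eventually_ne_atTop 0] with s hs
  simp only [id]
  field_simp
  ring

theorem tendsto_div_atBot_of_hasDerivAt_tendsto {g g' : ℝ → ℝ} {L : ℝ}
    (hg : ∀ s, HasDerivAt g (g' s) s) (h : Tendsto g' atBot (𝓝 L)) :
    Tendsto (fun s => g s / s) atBot (𝓝 L) := by
  have hrev : ∀ s, HasDerivAt (fun s => -g (-s)) (g' (-s)) s := fun s => by
    simpa using ((hg (-s)).comp s (hasDerivAt_neg s)).fun_neg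
  refine ((tendsto_div_atTop_of_hasDerivAt_tendsto hrev
    (h.comp tendsto_neg_atTop_atBot)).comp tendsto_neg_atBot_atTop).congr fun s => ?_
  simp [neg_div_neg_eq]

theorem tendsto_atBot_atTop_of_tendsto_div {g : ℝ → ℝ} {L : ℝ}
    (h : Tendsto (fun s => g s / s) atTop (𝓝 L)) (hL : L < 0) : Tendsto g atTop atBot := by
  refine (h.neg_mul_atTop hL tendsto_id).congr' ?_
  filter_upwards [eventually_ne_atTop 0] with s hs
  exact div_mul_cancel₀ _ hs

theorem tendsto_atBot_atBot_of_tendsto_div {g : ℝ → ℝ} {L : ℝ}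
    (h : Tendsto (fun s => g s / s) atBot (𝓝 L)) (hL : 0 < L) : Tendsto g atBot atBot := by
  refine (h.pos_mul_atBot hL tendsto_id).congr' ?_
  filter_upwards [eventually_ne_atBot 0] with s hs
  exact div_mul_cancel₀ _ hs

end SlopeAtInfinity

section AutonomousODE

variable {E : Type*} [NormedAddCommGroup E] [NormedSpace ℝ E] {f : E → E} {γ : ℝ → E} {t₀ : ℝ}

theorem eq_of_hasDerivAt_of_apply_eq_zero (hf : LocallyLipschitz f)
    (hγ : ∀ t, HasDerivAt γ (f (γ t)) t) (h : f (γ t₀) = 0) (t : ℝ) : γ t = γ t₀ := by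
  have hγc : Continuous γ := continuous_iff_continuousAt.2 fun t => (hγ t).continuousAt
  -- local uniqueness makes the set where `γ` sits at the equilibrium open
  have hopen : IsOpen {t | γ t = γ t₀} := isOpen_iff_mem_nhds.2 fun t₁ (ht₁ : γ t₁ = γ t₀) => by
    obtain ⟨K, U, hU, hlip⟩ := hf (γ t₀)
    refine ODE_solution_unique_of_eventually (v := fun _ => f) (s := fun _ => U)
      (Eventually.of_forall fun _ => hlip) ?_ ?_ ht₁
    · filter_upwards [hγc.continuousAt.preimage_mem_nhds (ht₁ ▸ hU)] with t ht
      exact ⟨hγ t, ht⟩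
    · exact Eventually.of_forall fun t => ⟨h ▸ hasDerivAt_const t _, mem_of_mem_nhds hU⟩
  exact eq_univ_iff_forall.1
    (IsClopen.eq_univ ⟨isClosed_eq hγc continuous_const, hopen⟩ ⟨t₀, rfl⟩) t

theorem apply_ne_zero_of_hasDerivAt (hf : LocallyLipschitz f)
    (hγ : ∀ t, HasDerivAt γ (f (γ t)) t) (h₀ : f (γ t₀) ≠ 0) (t : ℝ) : f (γ t) ≠ 0 := fun ht =>
  h₀ (eq_of_hasDerivAt_of_apply_eq_zero hf hγ ht t₀ ▸ ht)

end AutonomousODE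

section ScalarAutonomousODE

variable {f θ : ℝ → ℝ} {t₀ : ℝ}

theorem strictMono_or_strictAnti_of_hasDerivAt (hf : LocallyLipschitz f)
    (hθ : ∀ t, HasDerivAt θ (f (θ t)) t) (h₀ : f (θ t₀) ≠ 0) : StrictMono θ ∨ StrictAnti θ := by
  rcases hasDerivWithinAt_forall_lt_or_forall_gt_of_forall_ne convex_univ
    (fun t _ => (hθ t).hasDerivWithinAt) (fun t _ => apply_ne_zero_of_hasDerivAt hf hθ h₀ t)
    with hneg | hpos
  · exact Or.inr (strictAnti_of_hasDerivAt_neg hθ fun t => hneg t trivial)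
  · exact Or.inl (strictMono_of_hasDerivAt_pos hθ fun t => hpos t trivial)

theorem mem_Ioo_of_hasDerivAt (hf : LocallyLipschitz f)
    (hθ : ∀ t, HasDerivAt θ (f (θ t)) t) (h₀ : f (θ t₀) ≠ 0) {a b : ℝ}
    (hb : b < θ t₀) (hfb : f b = 0) (ha : θ t₀ < a) (hfa : f a = 0) (t : ℝ) :
    θ t ∈ Ioo b a := by
  have hθc : Continuous θ := continuous_iff_continuousAt.2 fun t => (hθ t).continuousAt
  have hnot : ∀ c, f c = 0 → ∀ s, θ s ≠ c := fun c hc s hs =>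
    apply_ne_zero_of_hasDerivAt hf hθ h₀ s (by rwa [hs])
  refine ⟨lt_of_not_ge fun htb => ?_, lt_of_not_ge fun hat => ?_⟩
  · obtain ⟨s, hs⟩ := intermediate_value_univ t t₀ hθc ⟨htb, hb.le⟩
    exact hnot b hfb s hs
  · obtain ⟨s, hs⟩ := intermediate_value_univ t₀ t hθc ⟨ha.le, hat⟩
    exact hnot a hfa s hs

theorem apply_eq_zero_of_tendsto_atTop (hf : Continuous f) (hθ : ∀ t, HasDerivAt θ (f (θ t)) t)
    {p : ℝ} (hp : Tendsto θ atTop (𝓝 p)) : f p = 0 :=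
  tendsto_nhds_unique (tendsto_div_atTop_of_hasDerivAt_tendsto hθ ((hf.tendsto p).comp hp))
    (by simpa [div_eq_mul_inv] using hp.mul tendsto_inv_atTop_zero)

theorem apply_eq_zero_of_tendsto_atBot (hf : Continuous f) (hθ : ∀ t, HasDerivAt θ (f (θ t)) t)
    {p : ℝ} (hp : Tendsto θ atBot (𝓝 p)) : f p = 0 :=
  tendsto_nhds_unique (tendsto_div_atBot_of_hasDerivAt_tendsto hθ ((hf.tendsto p).comp hp))
    (by simpa [div_eq_mul_inv] using hp.mul tendsto_inv_atBot_zero)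

theorem exists_tendsto_zero_of_hasDerivAt (hf : LocallyLipschitz f)
    (hθ : ∀ t, HasDerivAt θ (f (θ t)) t) (h₀ : f (θ t₀) ≠ 0)
    (hb : ∃ b < θ t₀, f b = 0) (ha : ∃ a > θ t₀, f a = 0) :
    (∃ p, Tendsto θ atTop (𝓝 p) ∧ f p = 0) ∧ (∃ p, Tendsto θ atBot (𝓝 p) ∧ f p = 0) := by
  obtain ⟨b, hb, hfb⟩ := hb
  obtain ⟨a, ha, hfa⟩ := ha
  have hmem := mem_Ioo_of_hasDerivAt hf hθ h₀ hb hfb ha hfa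
  have hbddBelow : BddBelow (range θ) := ⟨b, by rintro _ ⟨t, rfl⟩; exact (hmem t).1.le⟩
  have hbddAbove : BddAbove (range θ) := ⟨a, by rintro _ ⟨t, rfl⟩; exact (hmem t).2.le⟩
  obtain ⟨⟨p, hp⟩, ⟨q, hq⟩⟩ : (∃ p, Tendsto θ atTop (𝓝 p)) ∧ ∃ q, Tendsto θ atBot (𝓝 q) := by
    rcases strictMono_or_strictAnti_of_hasDerivAt hf hθ h₀ with hθm | hθm
    exacts [⟨⟨_, tendsto_atTop_ciSup hθm.monotone hbddAbove⟩,
        ⟨_, tendsto_atBot_ciInf hθm.monotone hbddBelow⟩⟩,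
      ⟨⟨_, tendsto_atTop_ciInf hθm.antitone hbddBelow⟩,
        ⟨_, tendsto_atBot_ciSup hθm.antitone hbddAbove⟩⟩]
  exact ⟨⟨p, hp, apply_eq_zero_of_tendsto_atTop hf.continuous hθ hp⟩,
    ⟨q, hq, apply_eq_zero_of_tendsto_atBot hf.continuous hθ hq⟩⟩

end ScalarAutonomousODE

section Translator

noncomputable def translatorAngleField (lam μ θ₀ x : ℝ) : ℝ := μ * cos x - (x - θ₀ + lam) * sin x

variable {lam μ θ₀ : ℝ}

theorem locallyLipschitz_translatorAngleField :
    LocallyLipschitz (translatorAngleField lam μ θ₀) :=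
  ContDiff.locallyLipschitz (𝕂 := ℝ) (by unfold translatorAngleField; fun_prop)

theorem translatorAngleField_neg (x : ℝ) :
    translatorAngleField lam μ θ₀ (-x) = translatorAngleField (-lam) μ (-θ₀) x := by
  simp only [translatorAngleField, cos_neg, sin_neg]
  ring

-- the field is `-(x - θ₀ + lam)` at `π/2 + 2πn` and `x - θ₀ + lam` half a turn later
theorem exists_translatorAngleField_eq_zero_gt (M : ℝ) :
    ∃ a > M, translatorAngleField lam μ θ₀ a = 0 := by
  obtain ⟨n, hn⟩ := exists_nat_gt (max M (θ₀ - lam))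
  have hn' : (n : ℝ) ≤ n * (2 * π) :=
    le_mul_of_one_le_right n.cast_nonneg (by linarith [pi_gt_three])
  set x := π / 2 + n * (2 * π) with hxdef
  have hx : max M (θ₀ - lam) < x := by linarith [pi_pos]
  have hfx : translatorAngleField lam μ θ₀ x < 0 := by
    simp only [translatorAngleField, x, sin_add_nat_mul_two_pi, cos_add_nat_mul_two_pi,
      sin_pi_div_two, cos_pi_div_two]
    linarith [le_max_right M (θ₀ - lam)]
  have hfxπ : 0 < translatorAngleField lam μ θ₀ (x + π) := by
    simp only [translatorAngleField, sin_add_pi, cos_add_pi, x, sin_add_nat_mul_two_pi,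
      cos_add_nat_mul_two_pi, sin_pi_div_two, cos_pi_div_two]
    linarith [le_max_right M (θ₀ - lam), pi_pos]
  obtain ⟨a, ha, hfa⟩ := intermediate_value_Icc (by linarith [pi_pos] : x ≤ x + π)
    locallyLipschitz_translatorAngleField.continuous.continuousOn
    ⟨hfx.le, hfxπ.le⟩
  exact ⟨a, by linarith [ha.1, le_max_left M (θ₀ - lam)], hfa⟩

theorem exists_translatorAngleField_eq_zero_lt (M : ℝ) :
    ∃ b < M, translatorAngleField lam μ θ₀ b = 0 := by
  obtain ⟨a, ha, hfa⟩ := exists_translatorAngleField_eq_zero_gt (lam := -lam) (μ := μ)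
    (θ₀ := -θ₀) (-M)
  exact ⟨-a, by linarith, by rw [translatorAngleField_neg, hfa]⟩

theorem sin_ne_zero_of_translatorAngleField_eq_zero (hμ : μ ≠ 0) {x : ℝ}
    (hx : translatorAngleField lam μ θ₀ x = 0) : sin x ≠ 0 := fun hsin => by
  have hcos : cos x = 0 := by
    simpa [translatorAngleField, hsin, hμ] using hx
  simpa [hsin, hcos] using sin_sq_add_cos_sq x

variable {y z θ : ℝ → ℝ}

theorem translator_first_integral (hy0 : y 0 = 0) (hz0 : z 0 = 0) (hθ0 : θ 0 = θ₀)
    (hy : ∀ s, HasDerivAt y (exp (z s) * cos (θ s)) s) (hz : ∀ s, HasDerivAt z (sin (θ s)) s)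
    (hθ : ∀ s, HasDerivAt θ
      (-lam * exp (-z s) * sin (θ s) + μ * (cos (θ s) - y s * exp (-z s) * sin (θ s))) s)
    (s : ℝ) : (lam + μ * y s) * exp (-z s) = θ s - θ₀ + lam := by
  have hderiv : ∀ s, HasDerivAt (fun s => θ s - (lam + μ * y s) * exp (-z s)) 0 s := fun s => by
    have hexp : HasDerivAt (fun s => exp (-z s)) (exp (-z s) * -sin (θ s)) s := (hz s).neg.exp
    refine ((hθ s).sub ((((hy s).const_mul μ).const_add lam).mul hexp)).congr_deriv ?_
    have : exp (z s) * exp (-z s) = 1 := by rw [← exp_add]; simp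
    linear_combination -μ * cos (θ s) * this
  have := is_const_of_deriv_eq_zero (fun s => (hderiv s).differentiableAt)
    (fun s => (hderiv s).deriv) s 0
  simp only [hy0, hz0, hθ0, neg_zero, exp_zero] at this
  linarith

theorem hasDerivAt_translatorAngleField
    (hθ : ∀ s, HasDerivAt θ
      (-lam * exp (-z s) * sin (θ s) + μ * (cos (θ s) - y s * exp (-z s) * sin (θ s))) s)
    (hI : ∀ s, (lam + μ * y s) * exp (-z s) = θ s - θ₀ + lam) (s : ℝ) :
    HasDerivAt θ (translatorAngleField lam μ θ₀ (θ s)) s := by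
  convert hθ s using 1
  unfold translatorAngleField
  linear_combination sin (θ s) * hI s

theorem tendsto_of_translator_first_integral (hμ : μ ≠ 0)
    (hI : ∀ s, (lam + μ * y s) * exp (-z s) = θ s - θ₀ + lam) {l : Filter ℝ} {p : ℝ}
    (hθ : Tendsto θ l (𝓝 p)) (hz : Tendsto z l atBot) : Tendsto y l (𝓝 (-lam / μ)) := by
  have hy : ∀ s, y s = ((θ s - θ₀ + lam) * exp (z s) - lam) / μ := fun s => by
    rw [eq_div_iff hμ, ← hI, mul_assoc, ← exp_add, neg_add_cancel, exp_zero]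
    ring
  have := ((((hθ.sub_const θ₀).add_const lam).mul (tendsto_exp_atBot.comp hz)).sub_const
    lam).div_const μ
  simpa [← hy, neg_div] using this

end Translator

theorem stmt17
    (lam μ θ₀ : ℝ) (y z θ : ℝ → ℝ)
    (hy0 : y 0 = 0) (hz0 : z 0 = 0) (hθ0 : θ 0 = θ₀)
    (hy : ∀ s : ℝ, HasDerivAt y (Real.exp (z s) * Real.cos (θ s)) s)
    (hz : ∀ s : ℝ, HasDerivAt z (Real.sin (θ s)) s)
    (hθ : ∀ s : ℝ, HasDerivAt θ
      (-lam * Real.exp (-z s) * Real.sin (θ s) +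
        μ * (Real.cos (θ s) - y s * Real.exp (-z s) * Real.sin (θ s))) s)
    (hμ : μ ≠ 0)
    (hne : μ * Real.cos θ₀ - (θ₀ - θ₀ + lam) * Real.sin θ₀ ≠ 0) :
    (∃ θp : ℝ, Tendsto θ atTop (𝓝 θp) ∧ Real.sin θp ≠ 0 ∧
      Tendsto (fun s => z s / s) atTop (𝓝 (Real.sin θp)) ∧
      (Real.sin θp < 0 → Tendsto y atTop (𝓝 (-lam / μ)))) ∧
    (∃ θm : ℝ, Tendsto θ atBot (𝓝 θm) ∧ Real.sin θm ≠ 0 ∧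
      Tendsto (fun s => z s / s) atBot (𝓝 (Real.sin θm)) ∧
      (0 < Real.sin θm → Tendsto y atBot (𝓝 (-lam / μ)))) := by
  have hI := translator_first_integral hy0 hz0 hθ0 hy hz hθ
  have hθ₀ : translatorAngleField lam μ θ₀ (θ 0) ≠ 0 := by rwa [hθ0]
  obtain ⟨⟨θp, hθp, hfp⟩, ⟨θm, hθm, hfm⟩⟩ := exists_tendsto_zero_of_hasDerivAt
    locallyLipschitz_translatorAngleField (hasDerivAt_translatorAngleField hθ hI) hθ₀
    (exists_translatorAngleField_eq_zero_lt _) (exists_translatorAngleField_eq_zero_gt _)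
  have hzp := tendsto_div_atTop_of_hasDerivAt_tendsto hz ((continuous_sin.tendsto θp).comp hθp)
  have hzm := tendsto_div_atBot_of_hasDerivAt_tendsto hz ((continuous_sin.tendsto θm).comp hθm)
  exact ⟨⟨θp, hθp, sin_ne_zero_of_translatorAngleField_eq_zero hμ hfp, hzp, fun h =>
      tendsto_of_translator_first_integral hμ hI hθp (tendsto_atBot_atTop_of_tendsto_div hzp h)⟩,
    ⟨θm, hθm, sin_ne_zero_of_translatorAngleField_eq_zero hμ hfm, hzm, fun h =>
      tendsto_of_translator_first_integral hμ hI hθm (tendsto_atBot_atBot_of_tendsto_div hzm h)⟩⟩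
end

section
/- Fix real numbers b ≠ 0, λ, and θ₀ with sin θ₀ ≠ 0, and let k be the integer with kπ < θ₀ < (k+1)π. Consider the system y'(s) = e^{z(s)} cos θ(s), z'(s) = sin θ(s), θ'(s) = [sin θ(s) / (e^{4z(s)} + b²)]·(b²(2 sin θ(s) cos θ(s) − λ e^{−z(s)} sin² θ(s)) − λ e^{3z(s)}), with y(0) = z(0) = 0, θ(0) = θ₀. Then: (i) any solution defined on an interval containing 0 satisfies kπ < θ(s) < (k+1)π for all s in that interval; (ii) there is a solution (y, z, θ) defined on all of ℝ; (iii) for any global solution, sin θ(s) ≠ 0 for all s, so z is strictly monotone on ℝ; and (iv) if λ ≠ 0, the set { s ∈ ℝ : cos θ(s) = 0 } contains at most one element, so y has at most one critical point. -/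
/-!
The lines `θ = jπ` consist of equilibria of the locally Lipschitz vector field
`(z, θ) ↦ (sin θ, F z θ)`, so by uniqueness a solution starting strictly between two of them
never reaches one. This gives (i), hence `sin θ ≠ 0`, and (iii) follows by Rolle.

Since moreover `|z'| ≤ 1`, a solution on `[-T, T]` stays in the compact box
`[-T, T] × [kπ, (k+1)π]`. Precomposing the field with the retraction onto this box makes it
globally Lipschitz and bounded, so Picard–Lindelöf solves the modified system on all of
`[-T, T]`; by the same barrier argument the solution stays in the box, where the two fields agree.
By uniqueness these solutions patch together to a global one, which is (ii).

Where `cos θ = 0` we have `sin² θ = 1`, so `(cos θ)' = λ (b² e^{-z} + e^{3z}) / (e^{4z} + b²)` has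
the sign of `λ`; a function that crosses zero always in the same direction vanishes at most once,
which is (iv).
-/

open Real Filter Topology Set

theorem LocallyLipschitz.exists_lipschitzOnWith_image_union {X Y : Type*} [PseudoMetricSpace X]
    [PseudoMetricSpace Y] {v : X → Y} (hv : LocallyLipschitz v) {γ γ' : ℝ → X} {s : Set ℝ}
    (hs : IsCompact s) (hγ : ContinuousOn γ s) (hγ' : ContinuousOn γ' s) :
    ∃ K, LipschitzOnWith K v (γ '' s ∪ γ' '' s) :=
  hv.locallyLipschitzOn.exists_lipschitzOnWith_of_compact
    ((hs.image_of_continuousOn hγ).union (hs.image_of_continuousOn hγ'))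

section IntegralCurve

variable {E : Type*} [NormedAddCommGroup E] [NormedSpace ℝ E] {v : E → E}

theorem IsIntegralCurveOn.eqOn_of_locallyLipschitz (hv : LocallyLipschitz v) {I : Set ℝ}
    (hI : I.OrdConnected) {γ γ' : ℝ → E} (hγ : IsIntegralCurveOn γ (fun _ ↦ v) I)
    (hγ' : IsIntegralCurveOn γ' (fun _ ↦ v) I) {t₀ : ℝ} (ht₀ : t₀ ∈ I) (h : γ t₀ = γ' t₀) :
    EqOn γ γ' I := by
  intro t ht
  rcases le_total t₀ t with hle | hle
  · have hsub : Icc t₀ t ⊆ I := hI.out ht₀ ht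
    obtain ⟨K, hK⟩ := hv.exists_lipschitzOnWith_image_union isCompact_Icc
      (hγ.continuousOn.mono hsub) (hγ'.continuousOn.mono hsub)
    have hnhds (τ : ℝ) (hτ : τ ∈ Ico t₀ t) : I ∈ 𝓝[≥] τ :=
      mem_of_superset (Icc_mem_nhdsGE hτ.2) (hI.out (hsub (Ico_subset_Icc_self hτ)) ht)
    exact ODE_solution_unique_of_mem_Icc_right (v := fun _ ↦ v) (fun _ _ ↦ hK)
      (hγ.continuousOn.mono hsub)
      (fun τ hτ ↦ (hγ τ (hsub (Ico_subset_Icc_self hτ))).mono_of_mem_nhdsWithin (hnhds τ hτ))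
      (fun τ hτ ↦ Or.inl (mem_image_of_mem _ (Ico_subset_Icc_self hτ)))
      (hγ'.continuousOn.mono hsub)
      (fun τ hτ ↦ (hγ' τ (hsub (Ico_subset_Icc_self hτ))).mono_of_mem_nhdsWithin (hnhds τ hτ))
      (fun τ hτ ↦ Or.inr (mem_image_of_mem _ (Ico_subset_Icc_self hτ))) h ⟨hle, le_rfl⟩
  · have hsub : Icc t t₀ ⊆ I := hI.out ht ht₀
    obtain ⟨K, hK⟩ := hv.exists_lipschitzOnWith_image_union isCompact_Icc
      (hγ.continuousOn.mono hsub) (hγ'.continuousOn.mono hsub)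
    have hnhds (τ : ℝ) (hτ : τ ∈ Ioc t t₀) : I ∈ 𝓝[≤] τ :=
      mem_of_superset (Icc_mem_nhdsLE hτ.1) (hI.out ht (hsub (Ioc_subset_Icc_self hτ)))
    exact ODE_solution_unique_of_mem_Icc_left (v := fun _ ↦ v) (fun _ _ ↦ hK)
      (hγ.continuousOn.mono hsub)
      (fun τ hτ ↦ (hγ τ (hsub (Ioc_subset_Icc_self hτ))).mono_of_mem_nhdsWithin (hnhds τ hτ))
      (fun τ hτ ↦ Or.inl (mem_image_of_mem _ (Ioc_subset_Icc_self hτ)))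
      (hγ'.continuousOn.mono hsub)
      (fun τ hτ ↦ (hγ' τ (hsub (Ioc_subset_Icc_self hτ))).mono_of_mem_nhdsWithin (hnhds τ hτ))
      (fun τ hτ ↦ Or.inr (mem_image_of_mem _ (Ioc_subset_Icc_self hτ))) h ⟨le_rfl, hle⟩

theorem IsIntegralCurveOn.eqOn_const_of_eq_zero (hv : LocallyLipschitz v) {I : Set ℝ}
    (hI : I.OrdConnected) {γ : ℝ → E} (hγ : IsIntegralCurveOn γ (fun _ ↦ v) I) {t₀ : ℝ}
    (ht₀ : t₀ ∈ I) (h0 : v (γ t₀) = 0) : EqOn γ (fun _ ↦ γ t₀) I :=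
  hγ.eqOn_of_locallyLipschitz hv hI ((isIntegralCurve_const fun _ ↦ h0).isIntegralCurveOn I) ht₀ rfl

theorem exists_isIntegralCurveOn_Icc_of_lipschitzWith [CompleteSpace E] {K L : NNReal}
    (hv : LipschitzWith K v) (hL : ∀ x, ‖v x‖ ≤ L) (x₀ : E) {T : ℝ} (hT : 0 ≤ T) :
    ∃ γ : ℝ → E, γ 0 = x₀ ∧ IsIntegralCurveOn γ (fun _ ↦ v) (Icc (-T) T) := by
  have hpl : IsPicardLindelof (fun _ ↦ v) (tmin := -T) (tmax := T) ⟨0, by simp [hT]⟩ x₀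
      (L * T.toNNReal) 0 L K :=
    .of_time_independent (fun x _ ↦ hL x) hv.lipschitzOnWith (by simp [hT])
  exact hpl.exists_eq_forall_mem_Icc_hasDerivWithinAt₀

theorem exists_isIntegralCurve_of_forall_isIntegralCurveOn_Icc (hv : LocallyLipschitz v)
    {x₀ : E} (h : ∀ T ≥ 0, ∃ γ : ℝ → E, γ 0 = x₀ ∧ IsIntegralCurveOn γ (fun _ ↦ v) (Icc (-T) T)) :
    ∃ γ : ℝ → E, γ 0 = x₀ ∧ IsIntegralCurve γ (fun _ ↦ v) := by
  choose! γ hγ0 hγ using h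
  have agree (T T' : ℝ) (hT : 0 ≤ T) (hT' : 0 ≤ T') :
      EqOn (γ T) (γ T') (Icc (-T) T ∩ Icc (-T') T') :=
    ((hγ T hT).mono inter_subset_left).eqOn_of_locallyLipschitz hv
      (ordConnected_Icc.inter ordConnected_Icc) ((hγ T' hT').mono inter_subset_right)
      ⟨⟨by linarith, hT⟩, ⟨by linarith, hT'⟩⟩ (by rw [hγ0 T hT, hγ0 T' hT'])
  refine ⟨fun t ↦ γ (|t| + 1) t, hγ0 _ (by positivity), fun t ↦ ?_⟩
  have hT : 0 ≤ |t| + 1 := by positivity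
  have hIcc : Icc (-(|t| + 1)) (|t| + 1) ∈ 𝓝 t :=
    Icc_mem_nhds (by linarith [neg_abs_le t]) (by linarith [le_abs_self t])
  have heq : (fun s ↦ γ (|s| + 1) s) =ᶠ[𝓝 t] γ (|t| + 1) := by
    filter_upwards [hIcc] with s hs
    exact agree _ _ (by positivity) hT ⟨abs_le.mp (le_add_of_nonneg_right zero_le_one), hs⟩
  exact ((hγ _ hT t (mem_of_mem_nhds hIcc)).hasDerivAt hIcc).congr_of_eventuallyEq heq

end IntegralCurve

def clampBox (a b c d : ℝ) (p : ℝ × ℝ) : ℝ × ℝ := (max a (min b p.1), max c (min d p.2))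

theorem lipschitzWith_clampBox (a b c d : ℝ) : LipschitzWith 1 (clampBox a b c d) := by
  have h := ((LipschitzWith.prod_fst.const_min b).const_max a).prodMk
    ((LipschitzWith.prod_snd.const_min d).const_max c)
  rwa [max_self] at h

theorem clampBox_mem {a b c d : ℝ} (hab : a ≤ b) (hcd : c ≤ d) (p : ℝ × ℝ) :
    clampBox a b c d p ∈ Icc a b ×ˢ Icc c d :=
  ⟨⟨le_max_left _ _, max_le hab (min_le_left _ _)⟩,
    ⟨le_max_left _ _, max_le hcd (min_le_left _ _)⟩⟩

theorem clampBox_eq_self {a b c d : ℝ} {p : ℝ × ℝ} (hp : p ∈ Icc a b ×ˢ Icc c d) :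
    clampBox a b c d p = p := by
  obtain ⟨⟨h1, h2⟩, h3, h4⟩ := hp
  simp [clampBox, h1, h2, h3, h4]

theorem LocallyLipschitz.exists_lipschitzWith_comp_clampBox {v : ℝ × ℝ → ℝ × ℝ}
    (hv : LocallyLipschitz v) {a b c d : ℝ} (hab : a ≤ b) (hcd : c ≤ d) :
    ∃ K L : NNReal, LipschitzWith K (v ∘ clampBox a b c d) ∧ ∀ p, ‖v (clampBox a b c d p)‖ ≤ L := by
  have hbox : IsCompact (Icc a b ×ˢ Icc c d) := isCompact_Icc.prod isCompact_Icc
  obtain ⟨K, hK⟩ := hv.locallyLipschitzOn.exists_lipschitzOnWith_of_compact hbox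
  obtain ⟨C, hC⟩ := hbox.exists_bound_of_continuousOn hv.continuous.continuousOn
  refine ⟨K * 1, C.toNNReal, ?_, fun p ↦ (hC _ (clampBox_mem hab hcd p)).trans C.le_coe_toNNReal⟩
  exact lipschitzOnWith_univ.mp <| hK.comp (lipschitzWith_clampBox a b c d).lipschitzOnWith
    fun p _ ↦ clampBox_mem hab hcd p

theorem ContinuousOn.mapsTo_Ioo_of_ne {f : ℝ → ℝ} {I : Set ℝ} (hI : IsPreconnected I)
    (hf : ContinuousOn f I) {t₀ a c : ℝ} (ht₀ : t₀ ∈ I) (h₀ : f t₀ ∈ Ioo a c)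
    (ha : ∀ t ∈ I, f t ≠ a) (hc : ∀ t ∈ I, f t ≠ c) : MapsTo f I (Ioo a c) := by
  have hJ := (hI.image f hf).ordConnected
  intro t ht
  refine ⟨lt_of_not_ge fun hle ↦ ?_, lt_of_not_ge fun hle ↦ ?_⟩
  · obtain ⟨s, hs, hsa⟩ := hJ.out (mem_image_of_mem f ht) (mem_image_of_mem f ht₀) ⟨hle, h₀.1.le⟩
    exact ha s hs hsa
  · obtain ⟨s, hs, hsc⟩ := hJ.out (mem_image_of_mem f ht₀) (mem_image_of_mem f ht) ⟨h₀.2.le, hle⟩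
    exact hc s hs hsc

theorem IsIntegralCurveOn.snd_mem_Ioo {v : ℝ × ℝ → ℝ × ℝ} (hv : LocallyLipschitz v) {a c : ℝ}
    (hv0 : ∀ p : ℝ × ℝ, p.2 = a ∨ p.2 = c → v p = 0) {I : Set ℝ} (hI : I.OrdConnected)
    {γ : ℝ → ℝ × ℝ} (hγ : IsIntegralCurveOn γ (fun _ ↦ v) I) {t₀ : ℝ} (ht₀ : t₀ ∈ I)
    (h₀ : (γ t₀).2 ∈ Ioo a c) : MapsTo (fun t ↦ (γ t).2) I (Ioo a c) := by
  have hconst (t : ℝ) (ht : t ∈ I) (hat : (γ t).2 = a ∨ (γ t).2 = c) : (γ t₀).2 = (γ t).2 :=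
    congrArg Prod.snd (hγ.eqOn_const_of_eq_zero hv hI ht (hv0 _ hat) ht₀)
  refine (continuous_snd.comp_continuousOn hγ.continuousOn).mapsTo_Ioo_of_ne hI.isPreconnected
    ht₀ h₀ (fun t ht hta ↦ ?_) (fun t ht htc ↦ ?_)
  · exact h₀.1.ne' (hta ▸ hconst t ht (Or.inl hta))
  · exact h₀.2.ne (htc ▸ hconst t ht (Or.inr htc))

theorem HasDerivAt.eventually_nhdsLT_lt {f : ℝ → ℝ} {f' x : ℝ} (hf : HasDerivAt f f' x)
    (hf' : 0 < f') : ∀ᶠ t in 𝓝[<] x, f t < f x := by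
  have hslope : ∀ᶠ t in 𝓝[<] x, 0 < slope f x t :=
    (hasDerivAt_iff_tendsto_slope.mp hf).mono_left (nhdsWithin_mono _ fun _ ht ↦ ne_of_lt ht)
      |>.eventually (eventually_gt_nhds hf')
  filter_upwards [hslope, self_mem_nhdsWithin] with t ht htx
  have hmul := mul_neg_of_pos_of_neg ht (sub_neg.mpr htx)
  rw [slope_def_field, div_mul_cancel₀ _ (sub_ne_zero.mpr htx.ne)] at hmul
  linarith

theorem Set.subsingleton_setOf_eq_zero_of_hasDerivAt {f f' : ℝ → ℝ}
    (hf : ∀ t, HasDerivAt f (f' t) t) (hf' : ∀ t, f t = 0 → 0 < f' t) :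
    {t | f t = 0}.Subsingleton := by
  suffices ∀ s₁ s₂, f s₁ = 0 → f s₂ = 0 → ¬ s₁ < s₂ by
    intro s₁ h₁ s₂ h₂
    exact le_antisymm (not_lt.mp (this s₂ s₁ h₂ h₁)) (not_lt.mp (this s₁ s₂ h₁ h₂))
  intro s₁ s₂ h₁ h₂ hlt
  have hcont : Continuous f := continuous_iff_continuousAt.mpr fun t ↦ (hf t).continuousAt
  -- `f` can only cross zero upwards, so it stays nonnegative after the zero `s₁`
  have hnonneg : ∀ t ∈ Icc s₁ s₂, -f t ≤ 0 :=
    image_le_of_deriv_right_lt_deriv_boundary' (f' := fun t ↦ -f' t) (B' := fun _ ↦ 0)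
      hcont.neg.continuousOn (fun t _ ↦ (hf t).neg.hasDerivWithinAt) (by simp [h₁])
      continuousOn_const (fun _ _ ↦ hasDerivWithinAt_const _ _ _)
      (fun t _ ht ↦ by linarith [hf' t (neg_eq_zero.mp ht)])
  obtain ⟨t, hft, hts⟩ := ((hf s₂).eventually_nhdsLT_lt (hf' s₂ h₂)).and
    (Ioo_mem_nhdsLT hlt) |>.exists
  linarith [hnonneg t (Ioo_subset_Icc_self hts)]

theorem strictMono_or_strictAnti_of_hasDerivAt_ne_zero {f f' : ℝ → ℝ}
    (hf : ∀ t, HasDerivAt f (f' t) t) (hf' : ∀ t, f' t ≠ 0) : StrictMono f ∨ StrictAnti f := by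
  have hcont : Continuous f := continuous_iff_continuousAt.mpr fun t ↦ (hf t).continuousAt
  refine hcont.strictMono_of_inj (.of_lt_imp_ne fun s t hlt hst ↦ ?_)
  obtain ⟨c, -, hc⟩ := exists_hasDerivAt_eq_zero hlt hcont.continuousOn hst fun x _ ↦ hf x
  exact hf' c hc

theorem sin_ne_zero_of_mem_Ioo {x : ℝ} {k : ℤ} (hx : x ∈ Ioo (k * π) ((k + 1) * π)) :
    sin x ≠ 0 := by
  rw [sin_ne_zero_iff]
  rintro n rfl
  have h₁ : (k : ℝ) < n := lt_of_mul_lt_mul_right hx.1 pi_pos.le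
  have h₂ : (n : ℝ) < k + 1 := lt_of_mul_lt_mul_right hx.2 pi_pos.le
  norm_cast at h₁ h₂
  omega

noncomputable def thetaRhs (b lam z θ : ℝ) : ℝ :=
  sin θ / (exp (4 * z) + b ^ 2) *
    (b ^ 2 * (2 * sin θ * cos θ - lam * exp (-z) * sin θ ^ 2) - lam * exp (3 * z))

-- The `(z, θ)`-part of the system; the `y`-equation decouples.
noncomputable def profileField (b lam : ℝ) (p : ℝ × ℝ) : ℝ × ℝ :=
  (sin p.2, thetaRhs b lam p.1 p.2)

theorem contDiff_profileField (b lam : ℝ) : ContDiff ℝ 1 (profileField b lam) := by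
  unfold profileField thetaRhs
  fun_prop (disch := intro; positivity)

theorem profileField_eq_zero_of_snd_eq {b lam : ℝ} {k : ℤ} {p : ℝ × ℝ}
    (hp : p.2 = k * π ∨ p.2 = (k + 1) * π) : profileField b lam p = 0 := by
  have hsin : sin p.2 = 0 := by
    rcases hp with hp | hp <;> rw [hp]
    · exact sin_int_mul_pi k
    · exact_mod_cast sin_int_mul_pi (k + 1)
  simp [profileField, thetaRhs, hsin]

theorem neg_sin_mul_thetaRhs_of_cos_eq_zero (b lam z θ : ℝ) (h : cos θ = 0) :
    -sin θ * thetaRhs b lam z θ =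
      lam * (b ^ 2 * exp (-z) + exp (3 * z)) / (exp (4 * z) + b ^ 2) := by
  have hsin : sin θ ^ 2 = 1 := by nlinarith [sin_sq_add_cos_sq θ]
  have hexpand : -sin θ * thetaRhs b lam z θ = -sin θ ^ 2 *
      (b ^ 2 * (2 * sin θ * cos θ - lam * exp (-z) * sin θ ^ 2) - lam * exp (3 * z)) /
        (exp (4 * z) + b ^ 2) := by
    unfold thetaRhs; ring
  rw [hexpand, hsin, h]
  ring

theorem exists_isIntegralCurveOn_Icc_profileField (b lam θ₀ : ℝ) (k : ℤ)
    (hk : θ₀ ∈ Ioo (k * π) ((k + 1) * π)) {T : ℝ} (hT : 0 ≤ T) :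
    ∃ γ : ℝ → ℝ × ℝ, γ 0 = (0, θ₀) ∧
      IsIntegralCurveOn γ (fun _ ↦ profileField b lam) (Icc (-T) T) := by
  have hkk : (k : ℝ) * π ≤ (k + 1) * π := (hk.1.trans hk.2).le
  set r := clampBox (-T) T (k * π) ((k + 1) * π)
  obtain ⟨K, L, hK, hL⟩ := (contDiff_profileField b lam).locallyLipschitz
    |>.exists_lipschitzWith_comp_clampBox (by linarith : -T ≤ T) hkk
  obtain ⟨γ, hγ0, hγ⟩ := exists_isIntegralCurveOn_Icc_of_lipschitzWith hK hL (0, θ₀) hT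
  have h0 : (0 : ℝ) ∈ Icc (-T) T := ⟨by linarith, hT⟩
  have hr0 (p : ℝ × ℝ) (hp : p.2 = k * π ∨ p.2 = (k + 1) * π) :
      (profileField b lam ∘ r) p = 0 := by
    have hrp : (r p).2 = p.2 := by rcases hp with hp | hp <;> simp [r, clampBox, hp, hkk]
    exact profileField_eq_zero_of_snd_eq (hrp ▸ hp)
  have hθ := hγ.snd_mem_Ioo hK.locallyLipschitz hr0 ordConnected_Icc h0 (by rw [hγ0]; exact hk)
  have hz (t : ℝ) (ht : t ∈ Icc (-T) T) : |(γ t).1| ≤ T := by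
    have hderiv (s : ℝ) (hs : s ∈ Icc (-T) T) :
        HasDerivWithinAt (fun s ↦ (γ s).1) (sin (r (γ s)).2) (Icc (-T) T) s :=
      (ContinuousLinearMap.fst ℝ ℝ ℝ).hasFDerivAt.comp_hasDerivWithinAt s (hγ s hs)
    have := Convex.norm_image_sub_le_of_norm_hasDerivWithin_le hderiv
      (fun s _ ↦ abs_sin_le_one _) (convex_Icc _ _) h0 ht
    simp only [hγ0, sub_zero, one_mul, Real.norm_eq_abs] at this
    exact this.trans (abs_le.mpr ht)
  refine ⟨γ, hγ0, fun t ht ↦ ?_⟩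
  have hmem : γ t ∈ Icc (-T) T ×ˢ Icc (k * π) ((k + 1) * π) :=
    ⟨abs_le.mp (hz t ht), Ioo_subset_Icc_self (hθ ht)⟩
  simpa only [Function.comp_apply, r, clampBox_eq_self hmem] using hγ t ht

theorem mapsTo_Ioo_of_hasDerivWithinAt_profile {b lam θ₀ : ℝ} {k : ℤ}
    (hk : θ₀ ∈ Ioo (k * π) ((k + 1) * π)) {I : Set ℝ} (hI : I.OrdConnected) (h0 : (0 : ℝ) ∈ I)
    {z θ : ℝ → ℝ} (hθ0 : θ 0 = θ₀) (hz : ∀ s ∈ I, HasDerivWithinAt z (sin (θ s)) I s)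
    (hθ : ∀ s ∈ I, HasDerivWithinAt θ (thetaRhs b lam (z s) (θ s)) I s) :
    MapsTo θ I (Ioo (k * π) ((k + 1) * π)) :=
  IsIntegralCurveOn.snd_mem_Ioo (γ := fun s ↦ (z s, θ s))
    (contDiff_profileField b lam).locallyLipschitz (fun _ ↦ profileField_eq_zero_of_snd_eq) hI
    (fun s hs ↦ (hz s hs).prodMk (hθ s hs)) h0 (hθ0 ▸ hk)

theorem exists_hasDerivAt_profile (b lam θ₀ : ℝ) (k : ℤ) (hk : θ₀ ∈ Ioo (k * π) ((k + 1) * π)) :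
    ∃ y z θ : ℝ → ℝ, y 0 = 0 ∧ z 0 = 0 ∧ θ 0 = θ₀ ∧
      (∀ s, HasDerivAt y (exp (z s) * cos (θ s)) s) ∧ (∀ s, HasDerivAt z (sin (θ s)) s) ∧
      ∀ s, HasDerivAt θ (thetaRhs b lam (z s) (θ s)) s := by
  obtain ⟨γ, hγ0, hγ⟩ := exists_isIntegralCurve_of_forall_isIntegralCurveOn_Icc
    (contDiff_profileField b lam).locallyLipschitz
    fun T hT ↦ exists_isIntegralCurveOn_Icc_profileField b lam θ₀ k hk hT
  have hcont : Continuous fun s ↦ exp (γ s).1 * cos (γ s).2 := by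
    have := hγ.continuous; fun_prop
  refine ⟨fun s ↦ ∫ τ in (0 : ℝ)..s, exp (γ τ).1 * cos (γ τ).2, fun s ↦ (γ s).1,
    fun s ↦ (γ s).2, intervalIntegral.integral_same, by simp [hγ0], by simp [hγ0],
    fun s ↦ ?_, fun s ↦ ?_, fun s ↦ ?_⟩
  · exact intervalIntegral.integral_hasDerivAt_right (hcont.intervalIntegrable _ _)
      (hcont.stronglyMeasurableAtFilter _ _) hcont.continuousAt
  · exact (ContinuousLinearMap.fst ℝ ℝ ℝ).hasFDerivAt.comp_hasDerivAt s (hγ s)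
  · exact (ContinuousLinearMap.snd ℝ ℝ ℝ).hasFDerivAt.comp_hasDerivAt s (hγ s)

theorem subsingleton_setOf_cos_eq_zero_profile {b lam : ℝ} (hlam : lam ≠ 0) {z θ : ℝ → ℝ}
    (hθ : ∀ s, HasDerivAt θ (thetaRhs b lam (z s) (θ s)) s) :
    {s | cos (θ s) = 0}.Subsingleton := by
  have hcos (s : ℝ) := (hθ s).cos
  rcases hlam.lt_or_gt with hneg | hpos
  · have := Set.subsingleton_setOf_eq_zero_of_hasDerivAt (f := fun s ↦ -cos (θ s))
      (fun s ↦ (hcos s).neg) fun s hs ↦ by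
      rw [neg_sin_mul_thetaRhs_of_cos_eq_zero _ _ _ _ (neg_eq_zero.mp hs)]
      exact neg_pos.mpr (div_neg_of_neg_of_pos (mul_neg_of_neg_of_pos hneg (by positivity))
        (by positivity))
    simpa only [neg_eq_zero] using this
  · exact Set.subsingleton_setOf_eq_zero_of_hasDerivAt hcos fun s hs ↦ by
      rw [neg_sin_mul_thetaRhs_of_cos_eq_zero _ _ _ _ hs]
      positivity

theorem stmt18_general (b lam θ₀ : ℝ)
    (k : ℤ) (hk₁ : (k : ℝ) * π < θ₀) (hk₂ : θ₀ < ((k : ℝ) + 1) * π)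
    (F : ℝ → ℝ → ℝ)
    (hF : ∀ zv θv : ℝ, F zv θv =
      Real.sin θv / (Real.exp (4 * zv) + b ^ 2) *
        (b ^ 2 * (2 * Real.sin θv * Real.cos θv -
          lam * Real.exp (-zv) * Real.sin θv ^ 2) - lam * Real.exp (3 * zv))) :
    -- (i) any solution on an interval containing 0 stays in (kπ, (k+1)π)
    (∀ (I : Set ℝ), I.OrdConnected → (0 : ℝ) ∈ I →
      ∀ y z θ : ℝ → ℝ,
        y 0 = 0 → z 0 = 0 → θ 0 = θ₀ →
        (∀ s ∈ I, HasDerivWithinAt y (Real.exp (z s) * Real.cos (θ s)) I s) →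
        (∀ s ∈ I, HasDerivWithinAt z (Real.sin (θ s)) I s) →
        (∀ s ∈ I, HasDerivWithinAt θ (F (z s) (θ s)) I s) →
        ∀ s ∈ I, (k : ℝ) * π < θ s ∧ θ s < ((k : ℝ) + 1) * π) ∧
    -- (ii) existence of a global solution
    (∃ y z θ : ℝ → ℝ,
      y 0 = 0 ∧ z 0 = 0 ∧ θ 0 = θ₀ ∧
      (∀ s : ℝ, HasDerivAt y (Real.exp (z s) * Real.cos (θ s)) s) ∧
      (∀ s : ℝ, HasDerivAt z (Real.sin (θ s)) s) ∧
      (∀ s : ℝ, HasDerivAt θ (F (z s) (θ s)) s)) ∧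
    -- (iii) and (iv) for any global solution
    (∀ y z θ : ℝ → ℝ,
      y 0 = 0 → z 0 = 0 → θ 0 = θ₀ →
      (∀ s : ℝ, HasDerivAt y (Real.exp (z s) * Real.cos (θ s)) s) →
      (∀ s : ℝ, HasDerivAt z (Real.sin (θ s)) s) →
      (∀ s : ℝ, HasDerivAt θ (F (z s) (θ s)) s) →
      (∀ s : ℝ, Real.sin (θ s) ≠ 0) ∧
      (StrictMono z ∨ StrictAnti z) ∧
      (lam ≠ 0 → {s : ℝ | Real.cos (θ s) = 0}.Subsingleton)) := by
  obtain rfl : F = thetaRhs b lam := funext fun zv ↦ funext (hF zv)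
  have hk : θ₀ ∈ Ioo (k * π) ((k + 1) * π) := ⟨hk₁, hk₂⟩
  refine ⟨fun I hI h0 _ z θ _ _ hθ0 _ hz hθ ↦
      mapsTo_Ioo_of_hasDerivWithinAt_profile hk hI h0 hθ0 hz hθ,
    exists_hasDerivAt_profile b lam θ₀ k hk, fun _ z θ _ _ hθ0 _ hz hθ ↦ ?_⟩
  have hsin (s : ℝ) : sin (θ s) ≠ 0 := sin_ne_zero_of_mem_Ioo <|
    mapsTo_Ioo_of_hasDerivWithinAt_profile hk ordConnected_univ (mem_univ 0) hθ0
      (fun s _ ↦ (hz s).hasDerivWithinAt) (fun s _ ↦ (hθ s).hasDerivWithinAt) (mem_univ s)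
  exact ⟨hsin, strictMono_or_strictAnti_of_hasDerivAt_ne_zero hz hsin,
    fun hlam ↦ subsingleton_setOf_cos_eq_zero_profile hlam hθ⟩

theorem stmt18 (b lam θ₀ : ℝ) (hb : b ≠ 0) (hθ₀ : Real.sin θ₀ ≠ 0)
    (k : ℤ) (hk₁ : (k : ℝ) * π < θ₀) (hk₂ : θ₀ < ((k : ℝ) + 1) * π)
    (F : ℝ → ℝ → ℝ)
    (hF : ∀ zv θv : ℝ, F zv θv =
      Real.sin θv / (Real.exp (4 * zv) + b ^ 2) *
        (b ^ 2 * (2 * Real.sin θv * Real.cos θv -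
          lam * Real.exp (-zv) * Real.sin θv ^ 2) - lam * Real.exp (3 * zv))) :
    -- (i) any solution on an interval containing 0 stays in (kπ, (k+1)π)
    (∀ (I : Set ℝ), I.OrdConnected → (0 : ℝ) ∈ I →
      ∀ y z θ : ℝ → ℝ,
        y 0 = 0 → z 0 = 0 → θ 0 = θ₀ →
        (∀ s ∈ I, HasDerivWithinAt y (Real.exp (z s) * Real.cos (θ s)) I s) →
        (∀ s ∈ I, HasDerivWithinAt z (Real.sin (θ s)) I s) →
        (∀ s ∈ I, HasDerivWithinAt θ (F (z s) (θ s)) I s) →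
        ∀ s ∈ I, (k : ℝ) * π < θ s ∧ θ s < ((k : ℝ) + 1) * π) ∧
    -- (ii) existence of a global solution
    (∃ y z θ : ℝ → ℝ,
      y 0 = 0 ∧ z 0 = 0 ∧ θ 0 = θ₀ ∧
      (∀ s : ℝ, HasDerivAt y (Real.exp (z s) * Real.cos (θ s)) s) ∧
      (∀ s : ℝ, HasDerivAt z (Real.sin (θ s)) s) ∧
      (∀ s : ℝ, HasDerivAt θ (F (z s) (θ s)) s)) ∧
    -- (iii) and (iv) for any global solution
    (∀ y z θ : ℝ → ℝ,
      y 0 = 0 → z 0 = 0 → θ 0 = θ₀ →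
      (∀ s : ℝ, HasDerivAt y (Real.exp (z s) * Real.cos (θ s)) s) →
      (∀ s : ℝ, HasDerivAt z (Real.sin (θ s)) s) →
      (∀ s : ℝ, HasDerivAt θ (F (z s) (θ s)) s) →
      (∀ s : ℝ, Real.sin (θ s) ≠ 0) ∧
      (StrictMono z ∨ StrictAnti z) ∧
      (lam ≠ 0 → {s : ℝ | Real.cos (θ s) = 0}.Subsingleton)) :=
  stmt18_general b lam θ₀ k hk₁ hk₂ F hF
end
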